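/- Let Φ be a root system of type ADE (simply-laced) of rank n ≥ 2 in ℝ^n. Then every type-1 decomposition Φ = Φ_1 ⊔ ⋯ ⊔ Φ_s satisfies Σ_{k=1}^s rank Φ_k ≥ 2n − 1, where rank Φ_k := dim_ℝ span_ℝ Φ_k. -/

import Mathlib

noncomputable section

/-- The standard inner product on `ℝ^d`. -/
def dotR {d : ℕ} (x y : Fin d → ℝ) : ℝ := ∑ i, x i * y i

/-- `Φ` is a root system in `ℝ^d`: a finite set of nonzero vectors spanning `ℝ^d`,
closed under the reflections `s_α`, with integral Cartan numbers. -/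
def IsRootSystem {d : ℕ} (Φ : Finset (Fin d → ℝ)) : Prop :=
  (∀ α ∈ Φ, α ≠ 0) ∧
  Submodule.span ℝ (Φ : Set (Fin d → ℝ)) = ⊤ ∧
  (∀ α ∈ Φ, ∀ β ∈ Φ, β - (2 * dotR β α / dotR α α) • α ∈ Φ) ∧
  (∀ α ∈ Φ, ∀ β ∈ Φ, ∃ n : ℤ, 2 * dotR β α / dotR α α = (n : ℝ))

/-- `Φ` is reduced: the only multiples of a root `α` in `Φ` are `±α`. -/
def IsReducedRS {d : ℕ} (Φ : Finset (Fin d → ℝ)) : Prop :=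
  ∀ α ∈ Φ, ∀ t : ℝ, t • α ∈ Φ → t = 1 ∨ t = -1

/-- `Φ` is irreducible: it is not the disjoint union of two nonempty mutually
orthogonal subsets. -/
def IsIrreducibleRS {d : ℕ} (Φ : Finset (Fin d → ℝ)) : Prop :=
  ∀ A B : Set (Fin d → ℝ), (Φ : Set (Fin d → ℝ)) = A ∪ B → Disjoint A B →
    (∀ a ∈ A, ∀ b ∈ B, dotR a b = 0) → A = ∅ ∨ B = ∅

namespace Stmt4Aux

variable {N : ℕ}

lemma dotR_comm (x y : Fin N → ℝ) : dotR x y = dotR y x := by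
  unfold dotR; exact Finset.sum_congr rfl fun i _ => mul_comm _ _

lemma dotR_self_eq_zero {x : Fin N → ℝ} (h : dotR x x = 0) : x = 0 := by
  unfold dotR at h
  have h2 : ∀ i ∈ Finset.univ, x i * x i = 0 := by
    intro i _
    have := Finset.sum_eq_zero_iff_of_nonneg (fun i _ => mul_self_nonneg (x i)) |>.mp h
    exact this i (Finset.mem_univ i)
  funext i
  have := h2 i (Finset.mem_univ i)
  exact mul_self_eq_zero.mp this

lemma dotR_self_ne_zero {x : Fin N → ℝ} (h : x ≠ 0) : dotR x x ≠ 0 :=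
  fun hc => h (dotR_self_eq_zero hc)

/-- dot with fixed second argument, as a linear map in the first argument. -/
def dotL (b : Fin N → ℝ) : (Fin N → ℝ) →ₗ[ℝ] ℝ where
  toFun x := dotR x b
  map_add' x y := by
    simp only [dotR, Pi.add_apply, add_mul, Finset.sum_add_distrib]
  map_smul' c x := by
    simp only [dotR, RingHom.id_apply, smul_eq_mul, Finset.mul_sum, Pi.smul_apply, mul_assoc]

lemma span_orth {S : Set (Fin N → ℝ)} {b : Fin N → ℝ} (h : ∀ a ∈ S, dotR a b = 0) :
    ∀ x ∈ Submodule.span ℝ S, dotR x b = 0 := by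
  intro x hx
  have hS : S ⊆ (LinearMap.ker (dotL b) : Set (Fin N → ℝ)) := by
    intro a ha; exact h a ha
  have := Submodule.span_le.mpr hS hx
  exact this

def RC (Φ : Finset (Fin N → ℝ)) : Prop :=
  ∀ α ∈ Φ, ∀ β ∈ Φ, β - (2 * dotR β α / dotR α α) • α ∈ Φ

/-- Lemma A': for irreducible reflection-closed Φ and a subspace V not containing Φ,
the roots outside V span at least span Φ. -/
lemma lemA (Φ : Finset (Fin N → ℝ)) (h0 : ∀ α ∈ Φ, α ≠ 0) (hrc : RC Φ)
    (hirr : IsIrreducibleRS Φ) (V : Submodule ℝ (Fin N → ℝ))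
    (hV : ¬ ((Φ : Set (Fin N → ℝ)) ⊆ (V : Set (Fin N → ℝ)))) :
    Submodule.span ℝ (Φ : Set (Fin N → ℝ)) ≤
      Submodule.span ℝ ((Φ : Set (Fin N → ℝ)) \ V) := by
  set U := Submodule.span ℝ ((Φ : Set (Fin N → ℝ)) \ V) with hUdef
  rw [Submodule.span_le]
  obtain ⟨a0, ha0Φ, ha0V⟩ := Set.not_subset.mp hV
  by_contra hcon
  obtain ⟨b, hbΦ, hbU⟩ := Set.not_subset.mp hcon
  -- roots outside V lie in U
  have houtU : ∀ a ∈ Φ, a ∉ V → a ∈ U := by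
    intro a ha hav
    exact Submodule.subset_span ⟨ha, hav⟩
  -- Step 1 : roots outside V are orthogonal to roots outside U
  have key : ∀ b' ∈ Φ, b' ∉ U → ∀ a ∈ Φ, a ∉ V → dotR a b' = 0 := by
    intro b' hb'Φ hb'U a haΦ haV
    by_contra hab
    have hb'0 : b' ≠ 0 := h0 b' hb'Φ
    have hc : (2 * dotR a b' / dotR b' b') ≠ 0 :=
      div_ne_zero (mul_ne_zero two_ne_zero hab) (dotR_self_ne_zero hb'0)
    set c := 2 * dotR a b' / dotR b' b' with hcdef
    have hγ : a - c • b' ∈ Φ := hrc b' hb'Φ a haΦ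
    have hb'V : b' ∈ V := by
      by_contra h
      exact hb'U (houtU b' hb'Φ h)
    by_cases hγU : (a - c • b') ∈ U
    · -- then b' ∈ U, contradiction
      have haU : a ∈ U := houtU a haΦ haV
      have : c • b' ∈ U := by
        have := Submodule.sub_mem U haU hγU
        simpa using this
      have : b' ∈ U := by
        have h2 := Submodule.smul_mem U c⁻¹ this
        rwa [inv_smul_smul₀ hc] at h2
      exact hb'U this
    · -- then a - c•b' ∈ V, so a ∈ V, contradiction
      have hγV : (a - c • b') ∈ V := by
        by_contra h
        exact hγU (houtU _ hγ h)
      have : a ∈ V := by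
        have := Submodule.add_mem V hγV (Submodule.smul_mem V c hb'V)
        simpa using this
      exact haV this
  -- Step 2 : everything in U is orthogonal to roots outside U
  have key2 : ∀ b' ∈ Φ, b' ∉ U → ∀ x ∈ U, dotR x b' = 0 := by
    intro b' hb' hb'U x hx
    refine span_orth ?_ x hx
    rintro a ⟨haΦ, haV⟩
    exact key b' hb' hb'U a haΦ haV
  -- Step 3 : irreducibility
  have hsplit := hirr ((Φ : Set (Fin N → ℝ)) ∩ U) ((Φ : Set (Fin N → ℝ)) \ U)
    (by ext x; constructor
        · intro hx; by_cases h : x ∈ U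
          · exact Or.inl ⟨hx, h⟩
          · exact Or.inr ⟨hx, h⟩
        · rintro (⟨h, _⟩ | ⟨h, _⟩) <;> exact h)
    (by rw [Set.disjoint_left]; rintro x ⟨_, hxU⟩ ⟨_, hxU'⟩; exact hxU' hxU)
    (by rintro a ⟨haΦ, haU⟩ b' ⟨hb'Φ, hb'U⟩
        exact key2 b' hb'Φ hb'U a haU)
  rcases hsplit with h | h
  · have : a0 ∈ (Φ : Set (Fin N → ℝ)) ∩ U := ⟨ha0Φ, houtU a0 ha0Φ ha0V⟩
    rw [h] at this; exact this
  · have : b ∈ (Φ : Set (Fin N → ℝ)) \ U := ⟨hbΦ, hbU⟩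
    rw [h] at this; exact this



open Module Submodule

attribute [local instance] Classical.propDecidable

lemma dotR_smul_smul (c d : ℝ) (x y : Fin N → ℝ) :
    dotR (c • x) (d • y) = c * d * dotR x y := by
  simp only [dotR, Pi.smul_apply, smul_eq_mul, Finset.mul_sum]
  exact Finset.sum_congr rfl fun i _ => by ring

lemma rc_filter (Φ : Finset (Fin N → ℝ)) (hrc : RC Φ) (F : Submodule ℝ (Fin N → ℝ)) :
    RC (Φ.filter (fun x => x ∈ F)) := by
  intro α hα β hβ
  rw [Finset.mem_filter] at hα hβ ⊢
  exact ⟨hrc α hα.1 β hβ.1, Submodule.sub_mem F hβ.2 (Submodule.smul_mem F _ hα.2)⟩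

lemma coe_filter_mem (Φ : Finset (Fin N → ℝ)) (F : Submodule ℝ (Fin N → ℝ)) :
    ((Φ.filter (fun x => x ∈ F) : Finset (Fin N → ℝ)) : Set (Fin N → ℝ))
      = (Φ : Set (Fin N → ℝ)) ∩ (F : Set (Fin N → ℝ)) := by
  ext x; simp [Finset.mem_filter, Set.mem_inter_iff]

lemma tower (Φ : Finset (Fin N → ℝ)) (h0 : ∀ α ∈ Φ, α ≠ 0) (hrc : RC Φ)
    (hirr : IsIrreducibleRS Φ) :
    ∀ j : ℕ, 1 ≤ j → j ≤ finrank ℝ (span ℝ (Φ : Set (Fin N → ℝ))) →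
    ∃ F : Submodule ℝ (Fin N → ℝ), finrank ℝ F = j ∧
      span ℝ ((Φ : Set (Fin N → ℝ)) ∩ (F : Set (Fin N → ℝ))) = F ∧
      IsIrreducibleRS (Φ.filter (fun x => x ∈ F)) := by
  intro j
  induction j with
  | zero => intro h; omega
  | succ j ih =>
    intro _ hj1
    by_cases hj0 : j = 0
    · -- base : j+1 = 1
      subst hj0
      have hΦne : ∃ α, α ∈ Φ := by
        by_contra h
        push_neg at h
        have he : (Φ : Set (Fin N → ℝ)) = ∅ := by
          ext x; simp only [Set.mem_empty_iff_false, iff_false, Finset.mem_coe]; exact h x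
        rw [he, Submodule.span_empty, finrank_bot] at hj1
        omega
      obtain ⟨α₀, hα₀⟩ := hΦne
      refine ⟨span ℝ {α₀}, finrank_span_singleton (h0 α₀ hα₀), ?_, ?_⟩
      · apply le_antisymm
        · rw [Submodule.span_le]; exact fun x hx => hx.2
        · apply Submodule.span_mono
          intro x hx
          rcases hx with rfl
          exact ⟨hα₀, Submodule.subset_span rfl⟩
      · intro A B hAB hdisj horth
        by_contra hcon
        push_neg at hcon
        obtain ⟨hA, hB⟩ := hcon
        obtain ⟨a, ha⟩ := hA
        obtain ⟨b, hb⟩ := hB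
        have hmem : ∀ x, x ∈ A ∪ B → x ∈ Φ ∧ x ∈ span ℝ ({α₀} : Set (Fin N → ℝ)) := by
          intro x hx
          rw [← hAB, coe_filter_mem] at hx
          exact hx
        obtain ⟨haΦ, haS⟩ := hmem a (Or.inl ha)
        obtain ⟨hbΦ, hbS⟩ := hmem b (Or.inr hb)
        obtain ⟨c, rfl⟩ := Submodule.mem_span_singleton.mp haS
        obtain ⟨d, rfl⟩ := Submodule.mem_span_singleton.mp hbS
        have hc0 : c ≠ 0 := by
          rintro rfl; exact h0 _ haΦ (by simp)
        have hd0 : d ≠ 0 := by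
          rintro rfl; exact h0 _ hbΦ (by simp)
        have := horth _ ha _ hb
        rw [dotR_smul_smul] at this
        exact (mul_ne_zero (mul_ne_zero hc0 hd0)
          (dotR_self_ne_zero (h0 α₀ hα₀))) this
    · -- step
      obtain ⟨F, hFr, hFs, hFi⟩ := ih (by omega) (by omega)
      have hout : ∃ x ∈ Φ, x ∉ F := by
        by_contra h; push_neg at h
        have hle : span ℝ (Φ : Set (Fin N → ℝ)) ≤ F :=
          Submodule.span_le.mpr (fun x hx => h x hx)
        have hmono := Submodule.finrank_mono hle
        rw [hFr] at hmono
        omega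
      have hΨne : ∃ x ∈ Φ, x ∈ F := by
        by_contra h; push_neg at h
        have he : (Φ : Set (Fin N → ℝ)) ∩ (F : Set (Fin N → ℝ)) = ∅ := by
          ext x
          simp only [Set.mem_inter_iff, Set.mem_empty_iff_false, iff_false, not_and,
            Finset.mem_coe, SetLike.mem_coe]
          exact h x
        rw [he, Submodule.span_empty] at hFs
        rw [← hFs, finrank_bot] at hFr
        omega
      have hpair : ∃ β ∈ Φ, β ∈ F ∧ ∃ α ∈ Φ, α ∉ F ∧ dotR β α ≠ 0 := by
        by_contra h; push_neg at h
        rcases hirr ((Φ : Set (Fin N → ℝ)) ∩ (F : Set (Fin N → ℝ)))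
            ((Φ : Set (Fin N → ℝ)) \ (F : Set (Fin N → ℝ)))
            (by ext x
                constructor
                · intro hx
                  by_cases hxF : x ∈ F
                  · exact Or.inl ⟨hx, hxF⟩
                  · exact Or.inr ⟨hx, hxF⟩
                · rintro (⟨h1, _⟩ | ⟨h1, _⟩) <;> exact h1)
            (by rw [Set.disjoint_left]; rintro x ⟨_, h1⟩ ⟨_, h2⟩; exact h2 h1)
            (by rintro x ⟨hx1, hx2⟩ y ⟨hy1, hy2⟩
                exact h x hx1 hx2 y hy1 hy2) with hc | hc
        · obtain ⟨x, hx1, hx2⟩ := hΨne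
          have : x ∈ ((Φ : Set (Fin N → ℝ)) ∩ (F : Set (Fin N → ℝ))) := ⟨hx1, hx2⟩
          rw [hc] at this; exact this
        · obtain ⟨x, hx1, hx2⟩ := hout
          have : x ∈ ((Φ : Set (Fin N → ℝ)) \ (F : Set (Fin N → ℝ))) := ⟨hx1, hx2⟩
          rw [hc] at this; exact this
      obtain ⟨β, hβΦ, hβF, α, hαΦ, hαF, hβα⟩ := hpair
      refine ⟨F ⊔ span ℝ {α}, ?_, ?_, ?_⟩
      case _ =>
        have hinf : F ⊓ span ℝ ({α} : Set (Fin N → ℝ)) = ⊥ := by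
          rw [eq_bot_iff]
          intro x hx
          rcases Submodule.mem_inf.mp hx with ⟨hx1, hx2⟩
          obtain ⟨e, rfl⟩ := Submodule.mem_span_singleton.mp hx2
          by_cases he : e = 0
          · simp [he]
          · exfalso
            apply hαF
            have h2 := Submodule.smul_mem F e⁻¹ hx1
            rwa [inv_smul_smul₀ he] at h2
        have h1 := Submodule.finrank_sup_add_finrank_inf_eq F (span ℝ ({α} : Set (Fin N → ℝ)))
        rw [hinf, finrank_bot, finrank_span_singleton (h0 α hαΦ), hFr] at h1
        omega
      case _ =>
        apply le_antisymm
        · rw [Submodule.span_le]; exact fun x hx => hx.2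
        · apply sup_le
          · conv_lhs => rw [← hFs]
            apply Submodule.span_mono
            intro x hx
            exact ⟨hx.1, Submodule.mem_sup_left hx.2⟩
          · rw [Submodule.span_le]
            intro x hx
            rcases hx with rfl
            exact Submodule.subset_span
              ⟨hαΦ, Submodule.mem_sup_right (Submodule.subset_span rfl)⟩
      case _ =>
        set F' := F ⊔ span ℝ ({α} : Set (Fin N → ℝ)) with hF'def
        have hαF' : α ∈ F' := Submodule.mem_sup_right (Submodule.subset_span rfl)
        have hFF' : F ≤ F' := le_sup_left
        intro A B hAB hdisj horth
        by_contra hcon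
        push_neg at hcon
        obtain ⟨hA, hB⟩ := hcon
        obtain ⟨a0, ha0⟩ := hA
        obtain ⟨b0, hb0⟩ := hB
        have hcov : ∀ x ∈ Φ, x ∈ F' → x ∈ A ∪ B := by
          intro x hx hxF'
          rw [← hAB, coe_filter_mem]; exact ⟨hx, hxF'⟩
        have hmemΨ' : ∀ x, x ∈ A ∪ B → x ∈ Φ ∧ x ∈ F' := by
          intro x hx; rw [← hAB, coe_filter_mem] at hx; exact hx
        have hΨsub : ((Φ.filter (fun x => x ∈ F) : Finset (Fin N → ℝ)) : Set (Fin N → ℝ)) ⊆ A ∪ B := by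
          rw [coe_filter_mem]; intro x hx; exact hcov x hx.1 (hFF' hx.2)
        rcases hFi (A ∩ ((Φ.filter (fun x => x ∈ F) : Finset (Fin N → ℝ)) : Set (Fin N → ℝ)))
            (B ∩ ((Φ.filter (fun x => x ∈ F) : Finset (Fin N → ℝ)) : Set (Fin N → ℝ)))
            (by ext x
                constructor
                · intro hx
                  rcases hΨsub hx with h | h
                  · exact Or.inl ⟨h, hx⟩
                  · exact Or.inr ⟨h, hx⟩
                · rintro (⟨h1, h2⟩ | ⟨h1, h2⟩) <;> exact h2)
            (Set.disjoint_of_subset Set.inter_subset_left Set.inter_subset_left hdisj)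
            (fun x hx y hy => horth x hx.1 y hy.1) with hc | hc
        · -- A ∩ Ψ = ∅ : Ψ ⊆ B
          have hΨB : ∀ x ∈ Φ, x ∈ F → x ∈ B := by
            intro x hx hxF
            rcases hcov x hx (hFF' hxF) with h | h
            · exfalso
              have hmem : x ∈ A ∩ ((Φ.filter (fun y => y ∈ F) : Finset (Fin N → ℝ)) : Set (Fin N → ℝ)) := by
                refine ⟨h, ?_⟩
                rw [coe_filter_mem]; exact ⟨hx, hxF⟩
              rw [hc] at hmem; exact hmem
            · exact h
          have hβB : β ∈ B := hΨB β hβΦ hβF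
          have hαB : α ∈ B := by
            rcases hcov α hαΦ hαF' with h | h
            · exfalso
              have := horth α h β hβB
              rw [dotR_comm] at this
              exact hβα this
            · exact h
          have ha0' := hmemΨ' a0 (Or.inl ha0)
          have horthB : ∀ x ∈ B, dotR x a0 = 0 := by
            intro x hx; rw [dotR_comm]; exact horth a0 ha0 x hx
          have hF'B : F' ≤ span ℝ B := by
            rw [hF'def]
            apply sup_le
            · rw [← hFs]
              apply Submodule.span_le.mpr
              intro x hx
              exact Submodule.subset_span (hΨB x hx.1 hx.2)
            · rw [Submodule.span_le]
              intro x hx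
              rcases hx with rfl
              exact Submodule.subset_span hαB
          have hz : dotR a0 a0 = 0 := span_orth horthB a0 (hF'B ha0'.2)
          exact h0 a0 ha0'.1 (dotR_self_eq_zero hz)
        · -- B ∩ Ψ = ∅ : Ψ ⊆ A
          have hΨA : ∀ x ∈ Φ, x ∈ F → x ∈ A := by
            intro x hx hxF
            rcases hcov x hx (hFF' hxF) with h | h
            · exact h
            · exfalso
              have hmem : x ∈ B ∩ ((Φ.filter (fun y => y ∈ F) : Finset (Fin N → ℝ)) : Set (Fin N → ℝ)) := by
                refine ⟨h, ?_⟩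
                rw [coe_filter_mem]; exact ⟨hx, hxF⟩
              rw [hc] at hmem; exact hmem
          have hβA : β ∈ A := hΨA β hβΦ hβF
          have hαA : α ∈ A := by
            rcases hcov α hαΦ hαF' with h | h
            · exact h
            · exfalso; exact hβα (horth β hβA α h)
          have hb0' := hmemΨ' b0 (Or.inr hb0)
          have horthA : ∀ x ∈ A, dotR x b0 = 0 := fun x hx => horth x hx b0 hb0
          have hF'A : F' ≤ span ℝ A := by
            rw [hF'def]
            apply sup_le
            · rw [← hFs]
              apply Submodule.span_le.mpr
              intro x hx
              exact Submodule.subset_span (hΨA x hx.1 hx.2)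
            · rw [Submodule.span_le]
              intro x hx
              rcases hx with rfl
              exact Submodule.subset_span hαA
          have hz : dotR b0 b0 = 0 := span_orth horthA b0 (hF'A hb0'.2)
          exact h0 b0 hb0'.1 (dotR_self_eq_zero hz)

lemma finrank_sup_le (p q : Submodule ℝ (Fin N → ℝ)) :
    finrank ℝ ↥(p ⊔ q) ≤ finrank ℝ p + finrank ℝ q := by
  have := Submodule.finrank_sup_add_finrank_inf_eq p q
  omega

lemma finrank_span_biUnion_le {ι : Type} (s : Finset ι) (P : ι → Set (Fin N → ℝ)) :
    finrank ℝ (span ℝ (⋃ k ∈ s, P k)) ≤ ∑ k ∈ s, finrank ℝ (span ℝ (P k)) := by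
  classical
  induction s using Finset.induction_on with
  | empty => simp
  | insert _ _ h ih =>
    rw [Finset.set_biUnion_insert, Submodule.span_union, Finset.sum_insert h]
    exact le_trans (finrank_sup_le _ _) (Nat.add_le_add_left ih _)

lemma finrank_insert (Qset : Set (Fin N → ℝ)) (F : Submodule ℝ (Fin N → ℝ))
    (hQ : span ℝ Qset ≤ F) {γ : Fin N → ℝ} (hγF : γ ∉ F) :
    finrank ℝ (span ℝ Qset) + 1 ≤ finrank ℝ (span ℝ (insert γ Qset)) := by
  rw [Submodule.span_insert]
  have hinf : span ℝ ({γ} : Set (Fin N → ℝ)) ⊓ span ℝ Qset = ⊥ := by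
    rw [eq_bot_iff]
    intro x hx
    rcases Submodule.mem_inf.mp hx with ⟨hx1, hx2⟩
    obtain ⟨e, rfl⟩ := Submodule.mem_span_singleton.mp hx1
    by_cases he : e = 0
    · simp [he]
    · exfalso
      apply hγF
      have h2 := Submodule.smul_mem F e⁻¹ (hQ hx2)
      rwa [inv_smul_smul₀ he] at h2
  have h1 := Submodule.finrank_sup_add_finrank_inf_eq
    (span ℝ ({γ} : Set (Fin N → ℝ))) (span ℝ Qset)
  have hγ0 : γ ≠ 0 := fun h => hγF (h ▸ F.zero_mem)
  rw [hinf, finrank_bot, finrank_span_singleton hγ0] at h1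
  omega

theorem aux (m : ℕ) (hm : 2 ≤ m) :
    ∀ (Φ : Finset (Fin N → ℝ)), (∀ α ∈ Φ, α ≠ 0) → RC Φ → IsIrreducibleRS Φ →
    finrank ℝ (span ℝ (Φ : Set (Fin N → ℝ))) = m →
    ∀ (s : ℕ) (P : Fin s → Set (Fin N → ℝ)),
      (∀ k, P k ≠ (Φ : Set (Fin N → ℝ))) →
      (⋃ k, P k) = (Φ : Set (Fin N → ℝ)) →
      (∀ k, (Φ : Set (Fin N → ℝ)) ∩ ↑(span ℝ (P k)) = P k) →
      2 * m - 1 ≤ ∑ k, finrank ℝ ↥(span ℝ (P k)) := by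
  induction m, hm using Nat.le_induction with
  | base =>
    intro Φ h0 hrc hirr hrank s P hproper hunion hspan
    have hPsub : ∀ k, P k ⊆ (Φ : Set (Fin N → ℝ)) := fun k => by
      rw [← hunion]; exact Set.subset_iUnion P k
    have hcover : ∀ x ∈ (Φ : Set (Fin N → ℝ)), ∃ k, x ∈ P k := by
      intro x hx; rw [← hunion] at hx; exact Set.mem_iUnion.mp hx
    have hnsub : ∀ k, ¬ ((Φ : Set (Fin N → ℝ)) ⊆ ↑(span ℝ (P k))) := by
      intro k h
      exact hproper k ((hspan k).symm.trans (Set.inter_eq_left.mpr h))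
    have hrank1 : ∀ k, ∀ x ∈ P k, 1 ≤ finrank ℝ (span ℝ (P k)) := by
      intro k x hx
      have hx0 : x ≠ 0 := h0 x (hPsub k hx)
      have hle : span ℝ ({x} : Set (Fin N → ℝ)) ≤ span ℝ (P k) :=
        Submodule.span_mono (by simpa using hx)
      have := Submodule.finrank_mono hle
      rwa [finrank_span_singleton hx0] at this
    have hle1 : ∀ k, finrank ℝ (span ℝ (P k)) ≤ 1 := by
      intro k
      by_contra h
      push_neg at h
      have hle : span ℝ (P k) ≤ span ℝ (Φ : Set (Fin N → ℝ)) :=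
        Submodule.span_mono (hPsub k)
      have heq : span ℝ (P k) = span ℝ (Φ : Set (Fin N → ℝ)) :=
        Submodule.eq_of_le_of_finrank_le hle (by rw [hrank]; omega)
      exact hnsub k (by rw [heq]; exact Submodule.subset_span)
    have main : ∀ k l : Fin s, ¬ ((Φ : Set (Fin N → ℝ)) ⊆ P k ∪ P l) := by
      intro k l hsub
      have h2 := lemA Φ h0 hrc hirr (span ℝ (P k)) (hnsub k)
      have h3 : ((Φ : Set (Fin N → ℝ)) \ ↑(span ℝ (P k))) ⊆ P l := by
        rintro x ⟨hx1, hx2⟩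
        rcases hsub hx1 with h | h
        · exact absurd (Submodule.subset_span h) hx2
        · exact h
      have h4 : span ℝ (Φ : Set (Fin N → ℝ)) ≤ span ℝ (P l) :=
        h2.trans (Submodule.span_mono h3)
      have h5 := Submodule.finrank_mono h4
      rw [hrank] at h5
      have := hle1 l
      omega
    have hΦne : ∃ x, x ∈ (Φ : Set (Fin N → ℝ)) := by
      by_contra h; push_neg at h
      have he : (Φ : Set (Fin N → ℝ)) = ∅ := Set.eq_empty_iff_forall_notMem.mpr h
      rw [he, Submodule.span_empty, finrank_bot] at hrank; omega
    obtain ⟨x0, hx0⟩ := hΦne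
    obtain ⟨k0, hk0⟩ := hcover x0 hx0
    have h2nd : ∃ l0, l0 ≠ k0 ∧ (P l0).Nonempty := by
      by_contra h; push_neg at h
      apply main k0 k0
      intro x hx
      obtain ⟨j, hj⟩ := hcover x hx
      by_cases hjk : j = k0
      · subst hjk; exact Or.inl hj
      · rw [h j hjk] at hj; exact absurd hj (Set.notMem_empty x)
    obtain ⟨l0, hl0k, hl0ne⟩ := h2nd
    have h3rd : ∃ m0, m0 ≠ k0 ∧ m0 ≠ l0 ∧ (P m0).Nonempty := by
      by_contra h; push_neg at h
      apply main k0 l0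
      intro x hx
      obtain ⟨j, hj⟩ := hcover x hx
      by_cases h1 : j = k0
      · subst h1; exact Or.inl hj
      · by_cases h2 : j = l0
        · subst h2; exact Or.inr hj
        · rw [h j h1 h2] at hj; exact absurd hj (Set.notMem_empty x)
    obtain ⟨m0, hm0k, hm0l, hm0ne⟩ := h3rd
    obtain ⟨y0, hy0⟩ := hl0ne
    obtain ⟨z0, hz0⟩ := hm0ne
    have hf1 : 1 ≤ finrank ℝ (span ℝ (P k0)) := hrank1 k0 x0 hk0
    have hf2 : 1 ≤ finrank ℝ (span ℝ (P l0)) := hrank1 l0 y0 hy0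
    have hf3 : 1 ≤ finrank ℝ (span ℝ (P m0)) := hrank1 m0 z0 hz0
    have hsubs : ({k0, l0, m0} : Finset (Fin s)) ⊆ Finset.univ := Finset.subset_univ _
    have hsumsub : ∑ k ∈ ({k0, l0, m0} : Finset (Fin s)), finrank ℝ ↥(span ℝ (P k))
        ≤ ∑ k, finrank ℝ ↥(span ℝ (P k)) := Finset.sum_le_sum_of_subset hsubs
    have hseq : ∑ k ∈ ({k0, l0, m0} : Finset (Fin s)), finrank ℝ ↥(span ℝ (P k))
        = finrank ℝ ↥(span ℝ (P k0)) + (finrank ℝ ↥(span ℝ (P l0)) + finrank ℝ ↥(span ℝ (P m0))) := by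
      rw [Finset.sum_insert (by simp [Ne.symm hl0k, Ne.symm hm0k]),
        Finset.sum_insert (by simp [Ne.symm hm0l]), Finset.sum_singleton]
    omega
  | succ m hm IH =>
    intro Φ h0 hrc hirr hrank s P hproper hunion hspan
    have hPsub : ∀ k, P k ⊆ (Φ : Set (Fin N → ℝ)) := fun k => by
      rw [← hunion]; exact Set.subset_iUnion P k
    have hcover : ∀ x ∈ (Φ : Set (Fin N → ℝ)), ∃ k, x ∈ P k := by
      intro x hx; rw [← hunion] at hx; exact Set.mem_iUnion.mp hx
    have hnsub : ∀ k, ¬ ((Φ : Set (Fin N → ℝ)) ⊆ ↑(span ℝ (P k))) := by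
      intro k h
      exact hproper k ((hspan k).symm.trans (Set.inter_eq_left.mpr h))
    obtain ⟨F, hFr, hFs, hFirr⟩ := tower Φ h0 hrc hirr m (by omega) (by omega)
    set Ψ := Φ.filter (fun x => x ∈ F) with hΨdef
    have hΨcoe : (Ψ : Set (Fin N → ℝ)) = (Φ : Set (Fin N → ℝ)) ∩ (F : Set (Fin N → ℝ)) :=
      coe_filter_mem Φ F
    have hΨspan : span ℝ (Ψ : Set (Fin N → ℝ)) = F := by rw [hΨcoe]; exact hFs
    by_cases hA : ∃ k, (Ψ : Set (Fin N → ℝ)) ⊆ P k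
    · obtain ⟨k, hk⟩ := hA
      have hk1 : F ≤ span ℝ (P k) := by rw [← hΨspan]; exact Submodule.span_mono hk
      have hfk : m ≤ finrank ℝ (span ℝ (P k)) := by
        have := Submodule.finrank_mono hk1; rwa [hFr] at this
      have h2 := lemA Φ h0 hrc hirr (span ℝ (P k)) (hnsub k)
      have h3 : ((Φ : Set (Fin N → ℝ)) \ ↑(span ℝ (P k))) ⊆ ⋃ l ∈ Finset.univ.erase k, P l := by
        rintro x ⟨hx1, hx2⟩
        obtain ⟨l, hl⟩ := hcover x hx1
        have hlk : l ≠ k := by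
          rintro rfl; exact hx2 (Submodule.subset_span hl)
        exact Set.mem_biUnion (Finset.mem_erase.mpr ⟨hlk, Finset.mem_univ l⟩) hl
      have h4 : m + 1 ≤ finrank ℝ (span ℝ (⋃ l ∈ Finset.univ.erase k, P l)) := by
        have := Submodule.finrank_mono (h2.trans (Submodule.span_mono h3))
        rwa [hrank] at this
      have h5 := finrank_span_biUnion_le (Finset.univ.erase k) P
      have h6 : finrank ℝ ↥(span ℝ (P k)) + ∑ l ∈ Finset.univ.erase k, finrank ℝ ↥(span ℝ (P l))
          = ∑ l, finrank ℝ ↥(span ℝ (P l)) :=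
        Finset.add_sum_erase _ (fun l => finrank ℝ ↥(span ℝ (P l))) (Finset.mem_univ k)
      omega
    · push_neg at hA
      set Q : Fin s → Set (Fin N → ℝ) := fun k => P k ∩ (F : Set (Fin N → ℝ)) with hQdef
      have hΨ0 : ∀ α ∈ Ψ, α ≠ 0 := fun α hα => h0 α (Finset.mem_of_mem_filter α hα)
      have hΨrc : RC Ψ := rc_filter Φ hrc F
      have hΨrank : finrank ℝ (span ℝ (Ψ : Set (Fin N → ℝ))) = m := by rw [hΨspan, hFr]
      have hQproper : ∀ k, Q k ≠ (Ψ : Set (Fin N → ℝ)) := by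
        intro k h
        exact hA k (by rw [← h]; exact Set.inter_subset_left)
      have hQunion : (⋃ k, Q k) = (Ψ : Set (Fin N → ℝ)) := by
        rw [hΨcoe, ← hunion]
        simp only [hQdef]
        exact (Set.iUnion_inter (F : Set (Fin N → ℝ)) P).symm
      have hQspan : ∀ k, (Ψ : Set (Fin N → ℝ)) ∩ ↑(span ℝ (Q k)) = Q k := by
        intro k
        apply Set.Subset.antisymm
        · rintro x ⟨hxΨ, hxs⟩
          rw [hΨcoe] at hxΨ
          have hQP : span ℝ (Q k) ≤ span ℝ (P k) := Submodule.span_mono Set.inter_subset_left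
          have hxPk : x ∈ P k := by rw [← hspan k]; exact ⟨hxΨ.1, hQP hxs⟩
          exact ⟨hxPk, hxΨ.2⟩
        · intro x hx
          have hxΨ : x ∈ (Ψ : Set (Fin N → ℝ)) := by
            rw [hΨcoe]; exact ⟨hPsub k hx.1, hx.2⟩
          exact ⟨hxΨ, Submodule.subset_span hx⟩
      have hIH := IH Ψ hΨ0 hΨrc hFirr hΨrank s Q hQproper hQunion hQspan
      have hΦF : ¬ ((Φ : Set (Fin N → ℝ)) ⊆ (F : Set (Fin N → ℝ))) := by
        intro h
        have := Submodule.finrank_mono (Submodule.span_le.mpr h)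
        rw [hrank, hFr] at this; omega
      obtain ⟨α, hαΦ, hαF⟩ := Set.not_subset.mp hΦF
      obtain ⟨k0, hk0⟩ := hcover α hαΦ
      have h2nd : ∃ l0, l0 ≠ k0 ∧ ∃ β ∈ P l0, β ∉ F := by
        by_contra h; push_neg at h
        have hsub : ((Φ : Set (Fin N → ℝ)) \ (F : Set (Fin N → ℝ))) ⊆ ↑(span ℝ (P k0)) := by
          rintro x ⟨hx1, hx2⟩
          obtain ⟨j, hj⟩ := hcover x hx1
          by_cases hjk : j = k0
          · subst hjk; exact Submodule.subset_span hj
          · exact absurd (h j hjk x hj) hx2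
        have h2 := lemA Φ h0 hrc hirr F hΦF
        have h4 : span ℝ (Φ : Set (Fin N → ℝ)) ≤ span ℝ (P k0) :=
          h2.trans (Submodule.span_le.mpr hsub)
        exact hnsub k0 (fun x hx => h4 (Submodule.subset_span hx))
      obtain ⟨l0, hl0k, β, hβP, hβF⟩ := h2nd
      have hinc : ∀ j, ∀ γ ∈ P j, γ ∉ F →
          finrank ℝ (span ℝ (Q j)) + 1 ≤ finrank ℝ (span ℝ (P j)) := by
        intro j γ hγ hγF
        have hQF : span ℝ (Q j) ≤ F := Submodule.span_le.mpr Set.inter_subset_right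
        have h1 := finrank_insert (Q j) F hQF hγF
        have h2 : span ℝ (insert γ (Q j)) ≤ span ℝ (P j) :=
          Submodule.span_mono (Set.insert_subset_iff.mpr ⟨hγ, Set.inter_subset_left⟩)
        have := Submodule.finrank_mono h2
        omega
      have hmono : ∀ j, finrank ℝ (span ℝ (Q j)) ≤ finrank ℝ (span ℝ (P j)) :=
        fun j => Submodule.finrank_mono (Submodule.span_mono Set.inter_subset_left)
      have hik0 := hinc k0 α hk0 hαF
      have hil0 := hinc l0 β hβP hβF
      have hl0mem : l0 ∈ Finset.univ.erase k0 :=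
        Finset.mem_erase.mpr ⟨hl0k, Finset.mem_univ l0⟩
      have e1 : finrank ℝ ↥(span ℝ (P k0)) + ∑ j ∈ Finset.univ.erase k0, finrank ℝ ↥(span ℝ (P j))
          = ∑ j, finrank ℝ ↥(span ℝ (P j)) :=
        Finset.add_sum_erase _ (fun j => finrank ℝ ↥(span ℝ (P j))) (Finset.mem_univ k0)
      have e2 : finrank ℝ ↥(span ℝ (P l0)) + ∑ j ∈ (Finset.univ.erase k0).erase l0, finrank ℝ ↥(span ℝ (P j))
          = ∑ j ∈ Finset.univ.erase k0, finrank ℝ ↥(span ℝ (P j)) :=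
        Finset.add_sum_erase _ (fun j => finrank ℝ ↥(span ℝ (P j))) hl0mem
      have e3 : finrank ℝ ↥(span ℝ (Q k0)) + ∑ j ∈ Finset.univ.erase k0, finrank ℝ ↥(span ℝ (Q j))
          = ∑ j, finrank ℝ ↥(span ℝ (Q j)) :=
        Finset.add_sum_erase _ (fun j => finrank ℝ ↥(span ℝ (Q j))) (Finset.mem_univ k0)
      have e4 : finrank ℝ ↥(span ℝ (Q l0)) + ∑ j ∈ (Finset.univ.erase k0).erase l0, finrank ℝ ↥(span ℝ (Q j))
          = ∑ j ∈ Finset.univ.erase k0, finrank ℝ ↥(span ℝ (Q j)) :=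
        Finset.add_sum_erase _ (fun j => finrank ℝ ↥(span ℝ (Q j))) hl0mem
      have e5 : ∑ j ∈ (Finset.univ.erase k0).erase l0, finrank ℝ ↥(span ℝ (Q j))
          ≤ ∑ j ∈ (Finset.univ.erase k0).erase l0, finrank ℝ ↥(span ℝ (P j)) :=
        Finset.sum_le_sum (fun j _ => hmono j)
      omega

end Stmt4Aux

/-- For a simply-laced (ADE) irreducible root system of rank `n ≥ 2`, every
type-1 decomposition `Φ = Φ_1 ⊔ ⋯ ⊔ Φ_s` satisfies `Σ rank Φ_k ≥ 2n − 1`. -/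
theorem stmt4 {n : ℕ} (hn : 2 ≤ n) (Φ : Finset (Fin n → ℝ))
    (hRS : IsRootSystem Φ) (hred : IsReducedRS Φ) (hirr : IsIrreducibleRS Φ)
    (hADE : ∀ α ∈ Φ, ∀ β ∈ Φ, dotR α α = dotR β β)
    (s : ℕ) (hs : 1 ≤ s) (P : Fin s → Set (Fin n → ℝ))
    (hne : ∀ k, (P k).Nonempty)
    (hproper : ∀ k, P k ⊂ (Φ : Set (Fin n → ℝ)))
    (hdisj : ∀ k l, k ≠ l → Disjoint (P k) (P l))
    (hunion : (⋃ k, P k) = (Φ : Set (Fin n → ℝ)))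
    (hspan : ∀ k, (Φ : Set (Fin n → ℝ)) ∩ ↑(Submodule.span ℝ (P k)) = P k) :
    2 * n - 1 ≤ ∑ k, Module.finrank ℝ ↥(Submodule.span ℝ (P k)) := by
  obtain ⟨h0, hspanTop, hrc, _hint⟩ := hRS
  have hrank : Module.finrank ℝ (Submodule.span ℝ (Φ : Set (Fin n → ℝ))) = n := by
    rw [hspanTop, finrank_top]
    exact Module.finrank_fin_fun ℝ
  exact Stmt4Aux.aux n hn Φ h0 hrc hirr hrank s P
    (fun k => (hproper k).ne) hunion hspan

end
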